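/- arXiv:1412.8550 — 2 statements merged into one kernel-verified Lean document; each statement's English description precedes it below -/
import Mathlib

section
/- For all integers n ≥ 1 and 1 ≤ k ≤ n-1, the constant c_{n,k} := |B_2^n|^{(n-k)/n} / |B_2^{n-k}| satisfies e^{-k/2} < c_{n,k} < 1, where |B_2^m| denotes the Lebesgue volume of the unit Euclidean ball in R^m. -/
open MeasureTheory Metric

noncomputable section

/-- Volume of the unit Euclidean ball in `ℝ^m`. -/
def unitBallVol (m : ℕ) : ℝ :=
  (volume (ball (0 : EuclideanSpace ℝ (Fin m)) 1)).toReal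

/-- The constant `c_{n,k} = |B_2^n|^{(n-k)/n} / |B_2^{n-k}|`. -/
def cnk (n k : ℕ) : ℝ :=
  unitBallVol n ^ (((n : ℝ) - k) / n) / unitBallVol (n - k)

/-!
Write `x = n / 2`, `y = (n - k) / 2` and `h t = log Γ(t + 1)`. The powers of `π` cancel and
`log c_{n,k} = h y - (y / x) h x`. As `h 0 = 0` and `log Γ` is strictly convex on `(0, ∞)` (it is
`log Γ(t + 1) - log t`, convex plus strictly convex), this is negative.

For the lower bound, convexity bounds `h x - h y` by `(x - y) log (x + 1)`, the slope of `h` on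
`[x, x + 1]`, while the elementary estimate `Γ(x + 1) > ((x + 1) / e) ^ x` at half-integers
(induction in steps of `1`, using `log (1 + 1 / t) ≤ 1 / t`) gives
`((x - y) / x) h x > (x - y) (log (x + 1) - 1)`. Together, `log c_{n,k} > -(x - y) = -k / 2`.
-/

open Real Set

theorem Real.strictConvexOn_log_Gamma : StrictConvexOn ℝ (Ioi 0) (log ∘ Gamma) := by
  have hshift : ConvexOn ℝ (Ioi 0) fun x => log (Gamma (1 + x)) :=
    (convexOn_log_Gamma.translate_right 1).subset
      (fun x (hx : 0 < x) => show 0 < 1 + x by linarith) (convex_Ioi 0)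
  refine (hshift.add_strictConvexOn strictConcaveOn_log_Ioi.neg).congr fun x (hx : 0 < x) => ?_
  simp only [Pi.add_apply, Pi.neg_apply, Function.comp_apply, add_comm 1 x, Gamma_add_one hx.ne',
    log_mul hx.ne' (Gamma_pos_of_pos hx).ne']
  ring

theorem Real.log_Gamma_add_one_lt_div_mul {x y : ℝ} (hy : 0 < y) (hyx : y < x) :
    log (Gamma (y + 1)) < y / x * log (Gamma (x + 1)) := by
  have hx : 0 < x := hy.trans hyx
  have h := strictConvexOn_log_Gamma.2 (mem_Ioi.2 one_pos) (mem_Ioi.2 (by linarith : 0 < x + 1))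
    (by linarith) (sub_pos.2 ((div_lt_one hx).2 hyx)) (div_pos hy hx) (sub_add_cancel 1 (y / x))
  have hcomb : (1 - y / x) * 1 + y / x * (x + 1) = y + 1 := by field_simp; ring
  simp only [smul_eq_mul, Function.comp_apply, Gamma_one, log_one, mul_zero, zero_add, hcomb] at h
  exact h

theorem Real.log_Gamma_sub_log_Gamma_le {a b : ℝ} (ha : 0 < a) (hab : a ≤ b) :
    log (Gamma b) - log (Gamma a) ≤ (b - a) * log b := by
  rcases hab.eq_or_lt with rfl | hab
  · simp
  have hb : 0 < b := ha.trans hab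
  have h := convexOn_log_Gamma.slope_mono_adjacent (mem_Ioi.2 ha)
    (mem_Ioi.2 (by linarith : 0 < b + 1)) hab (lt_add_one b)
  simp only [Function.comp_apply, Gamma_add_one hb.ne', log_mul hb.ne' (Gamma_pos_of_pos hb).ne',
    add_sub_cancel_left, add_sub_cancel_right, div_one] at h
  rwa [div_le_iff₀ (sub_pos.2 hab), mul_comm] at h

theorem Real.lt_log_Gamma_add_two_of_lt_log_Gamma_add_one {x : ℝ} (hx : -1 < x)
    (h : x * (log (x + 1) - 1) < log (Gamma (x + 1))) :
    (x + 1) * (log (x + 1 + 1) - 1) < log (Gamma (x + 1 + 1)) := by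
  have hx1 : 0 < x + 1 := by linarith
  have hlog : (x + 1) * (log (x + 1 + 1) - log (x + 1)) ≤ 1 := by
    have := log_le_sub_one_of_pos (div_pos (by linarith : 0 < x + 1 + 1) hx1)
    rw [log_div (by linarith) hx1.ne'] at this
    calc (x + 1) * (log (x + 1 + 1) - log (x + 1))
        ≤ (x + 1) * ((x + 1 + 1) / (x + 1) - 1) := by gcongr
      _ = 1 := by field_simp; ring
  rw [Gamma_add_one hx1.ne', log_mul hx1.ne' (Gamma_pos_of_pos hx1).ne']
  linarith

theorem Real.half_mul_log_sub_one_lt_log_Gamma {n : ℕ} (hn : n ≠ 0) :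
    (n / 2 : ℝ) * (log (n / 2 + 1) - 1) < log (Gamma (n / 2 + 1)) := by
  have hlog2 : log 2 < 1 := log_two_lt_d9.trans (by norm_num)
  obtain ⟨j, rfl⟩ := Nat.exists_eq_succ_of_ne_zero hn
  induction j using Nat.twoStepInduction with
  | zero =>
    have hΓ : Gamma (1 / 2 + 1) = √π / 2 := by
      rw [Gamma_add_one (by norm_num), Gamma_one_half_eq]; ring
    have hlog3 : log 3 < log π := log_lt_log (by norm_num) pi_gt_three
    simp only [Nat.succ_eq_add_one, zero_add, Nat.cast_one]
    rw [hΓ, log_div (by positivity) two_ne_zero, log_sqrt pi_pos.le,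
      show (1 : ℝ) / 2 + 1 = 3 / 2 by norm_num, log_div (by norm_num) two_ne_zero]
    linarith
  | one =>
    norm_num [Gamma_two]
    linarith
  | more j ih _ =>
    have := lt_log_Gamma_add_two_of_lt_log_Gamma_add_one (x := ((j + 1 : ℕ) : ℝ) / 2)
      (neg_one_lt_zero.trans_le (by positivity)) (ih j.succ_ne_zero)
    have hcast : (((j + 2).succ : ℕ) : ℝ) / 2 = ((j + 1 : ℕ) : ℝ) / 2 + 1 := by push_cast; ring
    rwa [hcast]

theorem Real.neg_sub_lt_log_Gamma_sub_div_mul {n : ℕ} (hn : n ≠ 0) {y : ℝ} (hy : -1 < y)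
    (hyn : y < n / 2) :
    -(n / 2 - y) < log (Gamma (y + 1)) - y / (n / 2) * log (Gamma (n / 2 + 1)) := by
  have hstirling := half_mul_log_sub_one_lt_log_Gamma hn
  set x : ℝ := n / 2
  have hx : 0 < x := by positivity
  have hslope := log_Gamma_sub_log_Gamma_le (a := y + 1) (b := x + 1) (by linarith) (by linarith)
  rw [add_sub_add_right_eq_sub] at hslope
  have hweighted := mul_lt_mul_of_pos_left hstirling (div_pos (sub_pos.2 hyn) hx)
  have hcancel : (x - y) / x * (x * (log (x + 1) - 1)) = (x - y) * (log (x + 1) - 1) := by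
    field_simp
  have hsplit : log (Gamma (y + 1)) - y / x * log (Gamma (x + 1)) =
      (x - y) / x * log (Gamma (x + 1)) - (log (Gamma (x + 1)) - log (Gamma (y + 1))) := by
    field_simp; ring
  rw [hsplit]
  linarith

theorem unitBallVol_eq_exp {p : ℕ} (hp : p ≠ 0) :
    unitBallVol p = exp (p / 2 * log π - log (Gamma (p / 2 + 1))) := by
  have : Nonempty (Fin p) := Fin.pos_iff_nonempty.mp (Nat.pos_of_ne_zero hp)
  have hΓ : 0 < Gamma (p / 2 + 1) := Gamma_pos_of_pos (by positivity)
  rw [unitBallVol, EuclideanSpace.volume_ball, Fintype.card_fin, ENNReal.ofReal_one, one_pow,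
    one_mul, ENNReal.toReal_ofReal (by positivity), exp_sub, exp_log hΓ, mul_comm,
    ← rpow_def_of_pos pi_pos, sqrt_eq_rpow, ← rpow_natCast, ← rpow_mul pi_pos.le]
  ring_nf

theorem cnk_eq_exp {n k : ℕ} (hkn : k < n) :
    cnk n k =
      exp (log (Gamma ((n - k) / 2 + 1)) - (n - k) / 2 / (n / 2) * log (Gamma (n / 2 + 1))) := by
  rw [cnk, unitBallVol_eq_exp (by omega), unitBallVol_eq_exp (by omega), ← exp_mul, ← exp_sub,
    Nat.cast_sub hkn.le]
  have hn : (n : ℝ) ≠ 0 := Nat.cast_ne_zero.2 (by omega)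
  congr 1
  field_simp
  ring

theorem cnk_bounds_general (n k : ℕ) (hk : 1 ≤ k) (hkn : k ≤ n - 1) :
    Real.exp (-(k : ℝ) / 2) < cnk n k ∧ cnk n k < 1 := by
  have hlt : k < n := by omega
  have hk0 : (0 : ℝ) < k := by exact_mod_cast hk
  have hkn' : (k : ℝ) < n := by exact_mod_cast hlt
  rw [cnk_eq_exp hlt, exp_lt_exp, exp_lt_one_iff]
  constructor
  · have := neg_sub_lt_log_Gamma_sub_div_mul (n := n) (by omega) (y := (n - k) / 2)
      (by linarith) (by linarith)
    convert this using 1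
    ring
  · have := log_Gamma_add_one_lt_div_mul (x := n / 2) (y := (n - k) / 2) (by linarith)
      (by linarith)
    linarith

/-- For all `1 ≤ k ≤ n-1`, one has `e^{-k/2} < c_{n,k} < 1`. -/
theorem cnk_bounds (n k : ℕ) (hn : 1 ≤ n) (hk : 1 ≤ k) (hkn : k ≤ n - 1) :
    Real.exp (-(k : ℝ) / 2) < cnk n k ∧ cnk n k < 1 :=
  cnk_bounds_general n k hk hkn
end
end

section
/- Let μ be a finite non-negative Borel measure on the Grassmannian Gr_{n-k} associated to a generalized k-intersection body K. Then μ(Gr_{n-k}) ≤ (n/(n-k)) · c_{n,k} · |K|^{k/n}. -/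
open MeasureTheory Metric

noncomputable section

/-- The Grassmannian of `(n-k)`-dimensional subspaces of `ℝ^n`. -/
def Grass (n k : ℕ) := {H : Submodule ℝ (EuclideanSpace ℝ (Fin n)) // Module.finrank ℝ H = n - k}

/-- Borel measurable structure on the Grassmannian, induced by orthogonal projections. -/
noncomputable instance (n k : ℕ) : MeasurableSpace (Grass n k) :=
  MeasurableSpace.comap
    (fun H => (H.1.subtypeL.comp (H.1.orthogonalProjection) :
      EuclideanSpace ℝ (Fin n) →L[ℝ] EuclideanSpace ℝ (Fin n)))
    (borel _)

/-!
Testing the defining identity of the intersection body against `g ≡ 1` gives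
`∫_{S^{n-1}} ‖θ‖_K^{-k} dθ = |S^{n-k-1}| ν(Gr_{n-k})`, since every `(n-k)`-dimensional
subspace meets the sphere in a copy of `S^{n-k-1}`. Hölder's inequality with exponents `n/k`
and `n/(n-k)` bounds the left side by `(∫ ‖θ‖_K^{-n})^{k/n} |S^{n-1}|^{(n-k)/n}`; the polar
formula `|K| = (1/n) ∫ ‖θ‖_K^{-n}` and `|S^{m-1}| = m |B_2^m|` turn this into the constant.
-/

theorem integral_pow_le_integral_pow_rpow_mul_measureReal_univ {α : Type*} [MeasurableSpace α]
    {μ : Measure α} [IsFiniteMeasure μ] {f : α → ℝ} (hf₀ : 0 ≤ᵐ[μ] f)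
    (hfm : AEStronglyMeasurable f μ) {k n : ℕ} (hk : 0 < k) (hkn : k < n)
    (hfn : Integrable (fun x => f x ^ n) μ) :
    ∫ x, f x ^ k ∂μ ≤
      (∫ x, f x ^ n ∂μ) ^ ((k : ℝ) / n) * μ.real Set.univ ^ (((n : ℝ) - k) / n) := by
  have hk₀ : (0 : ℝ) < k := by exact_mod_cast hk
  have hkn' : (k : ℝ) < n := by exact_mod_cast hkn
  have hn₀ : (0 : ℝ) < n := hk₀.trans hkn'
  have hpq : Real.HolderConjugate (1 / ((k : ℝ) / n)) (1 / ((n - k) / n)) :=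
    Real.holderConjugate_one_div (by positivity) (div_pos (sub_pos.2 hkn') hn₀)
      (by field_simp; ring)
  have hpow : ∀ᵐ x ∂μ, (f x ^ k) ^ (1 / ((k : ℝ) / n)) = f x ^ n := by
    filter_upwards [hf₀] with x hx
    rw [← Real.rpow_natCast, ← Real.rpow_mul hx, one_div_div, mul_div_cancel₀ _ hk₀.ne',
      Real.rpow_natCast]
  have hmem : MemLp (fun x => f x ^ k) (ENNReal.ofReal (1 / ((k : ℝ) / n))) μ := by
    rw [← integrable_norm_rpow_iff (f := fun x => f x ^ k) (hfm.pow k) (by simp; positivity)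
      ENNReal.ofReal_ne_top, ENNReal.toReal_ofReal hpq.nonneg]
    refine hfn.congr ?_
    filter_upwards [hf₀, hpow] with x hx hx'
    rw [Real.norm_of_nonneg (pow_nonneg hx k), hx']
  have holder := integral_mul_le_Lp_mul_Lq_of_nonneg hpq (hf₀.mono fun x hx => pow_nonneg hx k)
    (g := fun _ => (1 : ℝ)) (.of_forall fun _ => zero_le_one) hmem (memLp_const 1)
  simp only [mul_one, one_div_one_div, Real.one_rpow, integral_const, smul_eq_mul] at holder
  rwa [integral_congr_ae hpow] at holder

theorem Real.mul_rpow_mul_mul_rpow_of_add_eq_one {x a b s t : ℝ} (hx : 0 ≤ x) (ha : 0 ≤ a)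
    (hb : 0 ≤ b) (hst : s + t = 1) : (x * a) ^ s * (x * b) ^ t = x * (a ^ s * b ^ t) := by
  rw [Real.mul_rpow hx ha, Real.mul_rpow hx hb, mul_mul_mul_comm,
    ← Real.rpow_add' hx (by simp [hst]), hst, Real.rpow_one]

theorem unitBallVol_pos (m : ℕ) : 0 < unitBallVol m :=
  ENNReal.toReal_pos (measure_ball_pos _ _ one_pos).ne' measure_ball_lt_top.ne

section InnerProductSpace

open Module

variable {F : Type*} [NormedAddCommGroup F] [InnerProductSpace ℝ F] [FiniteDimensional ℝ F]
  [MeasurableSpace F] [BorelSpace F]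

theorem measureReal_unit_ball_eq_unitBallVol :
    volume.real (ball (0 : F) 1) = unitBallVol (finrank ℝ F) := by
  rw [unitBallVol, measureReal_def,
    ← (stdOrthonormalBasis ℝ F).measurePreserving_repr.measure_preimage
      measurableSet_ball.nullMeasurableSet, LinearIsometryEquiv.preimage_ball, map_zero]

theorem measureReal_toSphere_univ :
    (volume : Measure F).toSphere.real Set.univ = finrank ℝ F * unitBallVol (finrank ℝ F) := by
  rw [Measure.toSphere_real_apply_univ, measureReal_unit_ball_eq_unitBallVol]

theorem integral_pow_toSphere_le {n k : ℕ} (hF : finrank ℝ F = n) (hk : 0 < k) (hkn : k < n)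
    {ρ : sphere (0 : F) 1 → ℝ} (hρ : Continuous ρ) (hρ₀ : 0 ≤ ρ) :
    ∫ θ, ρ θ ^ k ∂(volume : Measure F).toSphere ≤
      n * ((1 / n * ∫ θ, ρ θ ^ n ∂(volume : Measure F).toSphere) ^ ((k : ℝ) / n) *
        unitBallVol n ^ (((n : ℝ) - k) / n)) := by
  have hn : (0 : ℝ) < n := by exact_mod_cast hk.trans hkn
  have hvol₀ : 0 ≤ 1 / n * ∫ θ, ρ θ ^ n ∂(volume : Measure F).toSphere :=
    mul_nonneg (by positivity) (integral_nonneg fun θ => pow_nonneg (hρ₀ θ) n)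
  calc ∫ θ, ρ θ ^ k ∂(volume : Measure F).toSphere
      ≤ (∫ θ, ρ θ ^ n ∂(volume : Measure F).toSphere) ^ ((k : ℝ) / n) *
          (volume : Measure F).toSphere.real Set.univ ^ (((n : ℝ) - k) / n) :=
        integral_pow_le_integral_pow_rpow_mul_measureReal_univ (.of_forall hρ₀)
          hρ.aestronglyMeasurable hk hkn
          ((hρ.pow n).integrable_of_hasCompactSupport (.of_compactSpace _))
    _ = (n * (1 / n * ∫ θ, ρ θ ^ n ∂(volume : Measure F).toSphere)) ^ ((k : ℝ) / n) *
          (n * unitBallVol n) ^ (((n : ℝ) - k) / n) := by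
        rw [measureReal_toSphere_univ, hF, ← mul_assoc, mul_one_div_cancel hn.ne', one_mul]
    _ = _ := Real.mul_rpow_mul_mul_rpow_of_add_eq_one hn.le hvol₀ (unitBallVol_pos n).le
        (by field_simp; ring)

end InnerProductSpace

theorem grassmannian_measure_bound_general (n k : ℕ) (hk : 1 ≤ k) (hkn : k ≤ n - 1)
    (N : EuclideanSpace ℝ (Fin n) → ℝ) (hNcont : Continuous N)
    (hNpos : ∀ x : EuclideanSpace ℝ (Fin n), x ≠ 0 → 0 < N x)
    (ν : Measure (Grass n k)) [IsFiniteMeasure ν]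
    (hGIB : ∀ g : EuclideanSpace ℝ (Fin n) → ℝ, Continuous g →
      (∫ θ : sphere (0 : EuclideanSpace ℝ (Fin n)) 1, ((N θ)⁻¹) ^ k * g θ
          ∂((volume : Measure (EuclideanSpace ℝ (Fin n))).toSphere))
        = ∫ H : Grass n k,
            (∫ y : sphere (0 : H.1) 1, g ((y : H.1) : EuclideanSpace ℝ (Fin n))
              ∂((volume : Measure H.1).toSphere)) ∂ν)
    (volK : ℝ)
    (hvolK : volK = (1 / (n : ℝ)) *
      ∫ θ : sphere (0 : EuclideanSpace ℝ (Fin n)) 1, ((N θ)⁻¹) ^ n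
        ∂((volume : Measure (EuclideanSpace ℝ (Fin n))).toSphere)) :
    (ν Set.univ).toReal ≤ ((n : ℝ) / ((n : ℝ) - k)) * cnk n k * volK ^ ((k : ℝ) / n) := by
  have hkn' : k < n := by omega
  have hsphere : ∀ H : Grass n k,
      (volume : Measure H.1).toSphere.real Set.univ = ((n : ℝ) - k) * unitBallVol (n - k) :=
    fun H => by rw [measureReal_toSphere_univ, H.2, Nat.cast_sub hkn'.le]
  have hmass : ∫ θ, (N θ)⁻¹ ^ k ∂(volume : Measure (EuclideanSpace ℝ (Fin n))).toSphere =
      ν.real Set.univ * ((n - k) * unitBallVol (n - k)) := by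
    simpa only [mul_one, integral_const, smul_eq_mul, hsphere] using
      hGIB (fun _ => 1) continuous_const
  have hN : ∀ θ : sphere (0 : EuclideanSpace ℝ (Fin n)) 1, 0 < N θ :=
    fun θ => hNpos θ (ne_zero_of_mem_unit_sphere θ)
  have holder := integral_pow_toSphere_le finrank_euclideanSpace_fin (by omega : 0 < k) hkn'
    (ρ := fun θ => (N θ)⁻¹)
    ((hNcont.comp continuous_subtype_val).inv₀ fun θ => (hN θ).ne')
    fun θ => (inv_pos.2 (hN θ)).le
  rw [hmass, ← hvolK] at holder
  have hc : 0 < ((n : ℝ) - k) * unitBallVol (n - k) :=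
    mul_pos (sub_pos.2 (by exact_mod_cast hkn')) (unitBallVol_pos (n - k))
  calc (ν Set.univ).toReal
      = ν.real Set.univ * ((n - k) * unitBallVol (n - k)) / ((n - k) * unitBallVol (n - k)) :=
        (mul_div_cancel_right₀ _ hc.ne').symm
    _ ≤ n * (volK ^ ((k : ℝ) / n) * unitBallVol n ^ (((n : ℝ) - k) / n))
          / ((n - k) * unitBallVol (n - k)) := by gcongr
    _ = n / (n - k) * cnk n k * volK ^ ((k : ℝ) / n) := by
        rw [cnk]; field_simp

/-- If `ν` is the measure on the Grassmannian associated to a generalized `k`-intersection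
body `K` (with gauge `N`), then `ν(Gr_{n-k}) ≤ (n/(n-k)) c_{n,k} |K|^{k/n}`, where `|K|` is
given by the polar volume formula. -/
theorem grassmannian_measure_bound (n k : ℕ) (hn : 1 ≤ n) (hk : 1 ≤ k) (hkn : k ≤ n - 1)
    (N : EuclideanSpace ℝ (Fin n) → ℝ) (hNcont : Continuous N)
    (hNpos : ∀ x : EuclideanSpace ℝ (Fin n), x ≠ 0 → 0 < N x)
    (hNhom : ∀ (c : ℝ) (x : EuclideanSpace ℝ (Fin n)), N (c • x) = |c| * N x)
    (ν : Measure (Grass n k)) [IsFiniteMeasure ν]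
    (hGIB : ∀ g : EuclideanSpace ℝ (Fin n) → ℝ, Continuous g →
      (∫ θ : sphere (0 : EuclideanSpace ℝ (Fin n)) 1, ((N θ)⁻¹) ^ k * g θ
          ∂((volume : Measure (EuclideanSpace ℝ (Fin n))).toSphere))
        = ∫ H : Grass n k,
            (∫ y : sphere (0 : H.1) 1, g ((y : H.1) : EuclideanSpace ℝ (Fin n))
              ∂((volume : Measure H.1).toSphere)) ∂ν)
    (volK : ℝ)
    (hvolK : volK = (1 / (n : ℝ)) *
      ∫ θ : sphere (0 : EuclideanSpace ℝ (Fin n)) 1, ((N θ)⁻¹) ^ n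
        ∂((volume : Measure (EuclideanSpace ℝ (Fin n))).toSphere)) :
    (ν Set.univ).toReal ≤ ((n : ℝ) / ((n : ℝ) - k)) * cnk n k * volK ^ ((k : ℝ) / n) :=
  grassmannian_measure_bound_general n k hk hkn N hNcont hNpos ν hGIB volK hvolK
end
end
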